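/- Let λ > 0, μ < 0, and set φ = −arctan(√(−μ)/λ), C_k = cos(kφ), S_k = −sin(kφ)/√(−μ). Then for every natural number k, the k-th power of A = [[λ, 1], [μ, λ]] equals (λ² − μ)^(k/2) times the matrix [[C_k, S_k], [μ·S_k, C_k]]. -/

import Mathlib

/-!
With `s = √(-μ)`, the matrices `!![a, b; μ b, a]` multiply like the complex numbers `a + s b i`,
and `A` corresponds to `l + s i = √(l² - μ) · e^{-iφ}`. So `A` is `√(l² - μ)` times the "rotation"
by `φ` in this algebra, and `A ^ k` is `(l² - μ)^{k/2}` times the rotation by `kφ`.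
-/

open Real

lemma Real.sqrt_one_add_div_sq {x : ℝ} (y : ℝ) (hx : 0 < x) :
    √(1 + (y / x) ^ 2) = √(x ^ 2 + y ^ 2) / x := by
  rw [show 1 + (y / x) ^ 2 = (x ^ 2 + y ^ 2) / x ^ 2 by field_simp,
    sqrt_div (by positivity), sqrt_sq hx.le]

lemma Real.cos_arctan_div {x : ℝ} (y : ℝ) (hx : 0 < x) :
    cos (arctan (y / x)) = x / √(x ^ 2 + y ^ 2) := by
  rw [cos_arctan, sqrt_one_add_div_sq y hx, one_div_div]

lemma Real.sin_arctan_div {x : ℝ} (y : ℝ) (hx : 0 < x) :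
    sin (arctan (y / x)) = y / √(x ^ 2 + y ^ 2) := by
  rw [sin_arctan, sqrt_one_add_div_sq y hx, div_div_div_cancel_right₀ hx.ne']

/-- The image of `e^{-iθ}` under `a + √(-μ) b i ↦ !![a, b; μ b, a]`. -/
noncomputable def rotationMatrix (μ θ : ℝ) : Matrix (Fin 2) (Fin 2) ℝ :=
  !![cos θ, -sin θ / √(-μ); μ * (-sin θ / √(-μ)), cos θ]

lemma rotationMatrix_add {μ} (hμ : μ < 0) (θ ψ : ℝ) :
    rotationMatrix μ (θ + ψ) = rotationMatrix μ θ * rotationMatrix μ ψ := by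
  obtain ⟨s, hs, rfl⟩ : ∃ s > 0, μ = -s ^ 2 :=
    ⟨√(-μ), sqrt_pos.mpr (by linarith), by simp [sq_sqrt, hμ.le]⟩
  ext i j
  fin_cases i <;> fin_cases j <;>
    simp [rotationMatrix, Matrix.mul_apply, cos_add, sin_add, hs.le] <;> field_simp <;> ring

lemma rotationMatrix_pow {μ} (hμ : μ < 0) (θ : ℝ) (k : ℕ) :
    rotationMatrix μ θ ^ k = rotationMatrix μ (k * θ) := by
  induction k with
  | zero => ext i j; fin_cases i <;> fin_cases j <;> simp [rotationMatrix]
  | succ k ih => rw [pow_succ, ih, ← rotationMatrix_add hμ]; push_cast; ring_nf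

lemma eq_sqrt_smul_rotationMatrix {l μ : ℝ} (hl : 0 < l) (hμ : μ < 0) :
    !![l, 1; μ, l] = √(l ^ 2 - μ) • rotationMatrix μ (-arctan (√(-μ) / l)) := by
  have hs : 0 < √(-μ) := sqrt_pos.mpr (neg_pos.mpr hμ)
  have hR : l ^ 2 + √(-μ) ^ 2 = l ^ 2 - μ := by rw [sq_sqrt (neg_nonneg.mpr hμ.le)]; ring
  have hRpos : 0 < √(l ^ 2 - μ) := sqrt_pos.mpr (by nlinarith)
  ext i j
  fin_cases i <;> fin_cases j <;>
    simp [rotationMatrix, cos_arctan_div _ hl, sin_arctan_div _ hl, hR] <;> field_simp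

theorem matrix_power_cos_sin_form (l μ : ℝ) (hl : 0 < l) (hμ : μ < 0)
    (φ : ℝ) (hφ : φ = -Real.arctan (Real.sqrt (-μ) / l))
    (A : Matrix (Fin 2) (Fin 2) ℝ) (hA : A = !![l, 1; μ, l]) (k : ℕ)
    (Ck Sk : ℝ) (hCk : Ck = Real.cos (k * φ)) (hSk : Sk = -Real.sin (k * φ) / Real.sqrt (-μ)) :
    A ^ k = ((l ^ 2 - μ) ^ ((k : ℝ) / 2)) • !![Ck, Sk; μ * Sk, Ck] := by
  have hmod : √(l ^ 2 - μ) ^ k = (l ^ 2 - μ) ^ ((k : ℝ) / 2) := by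
    rw [sqrt_eq_rpow, ← rpow_natCast, ← rpow_mul (by nlinarith)]
    ring_nf
  rw [hA, eq_sqrt_smul_rotationMatrix hl hμ, ← hφ, smul_pow, rotationMatrix_pow hμ, hmod,
    hCk, hSk, rotationMatrix]
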